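/- Let D ⊆ ℂ be a domain and A, B ⊆ D. Then for every ordinal α, (A ∪ B)_D^(α) = A_D^(α) ∪ B_D^(α). -/

import Mathlib

open Filter Set Metric

/-- Iterated (transfinite) derived set of `E` with respect to `A`:
`E_A^(0) = E`, `E_A^(α+1) = (E_A^(α))' ∩ A`, and at limit stages the
intersection over `1 ≤ β < α`. -/
noncomputable def derivIter (A : Set ℂ) (E : Set ℂ) (o : Ordinal) : Set ℂ :=
  Ordinal.limitRecOn o E
    (fun _ ih => {z | z ∈ A ∧ AccPt z (Filter.principal ih)})
    (fun o _ ih => ⋂ (β : Ordinal) (h : β < o) (_ : 1 ≤ β), ih β h)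

/-!
Derived sets are closed in a T1 space, so `S'' ⊆ S'`; hence from stage `1` on the sets
`E_D^(α)` decrease. The successor step commutes with unions because `(S ∪ T)' = S' ∪ T'`, and at
a limit stage the intersection of the unions of two decreasing families over the directed index
set `[1, α)` is the union of their intersections.
-/

lemma derivedSet_derivedSet_subset {X : Type*} [TopologicalSpace X] [T1Space X] (S : Set X) :
    derivedSet (derivedSet S) ⊆ derivedSet S :=
  (isClosed_iff_derivedSet_subset _).mp (isClosed_derivedSet S)

section

variable (A E : Set ℂ)

lemma derivIter_zero : derivIter A E 0 = E :=
  Ordinal.limitRecOn_zero ..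

lemma derivIter_add_one (o : Ordinal) :
    derivIter A E (o + 1) = A ∩ derivedSet (derivIter A E o) := by
  rw [derivIter, Ordinal.limitRecOn_add_one]
  rfl

lemma derivIter_of_isSuccLimit {o : Ordinal} (ho : Order.IsSuccLimit o) :
    derivIter A E o = ⋂ β : Ico 1 o, derivIter A E β := by
  rw [derivIter, Ordinal.limitRecOn_limit _ _ _ _ ho]
  ext z
  simp only [mem_iInter, Subtype.forall, mem_Ico, and_imp]
  exact forall_congr' fun _ ↦ forall_comm

lemma derivedSet_derivIter_add_one_subset (o : Ordinal) :
    derivedSet (derivIter A E (o + 1)) ⊆ derivedSet (derivIter A E o) :=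
  calc derivedSet (derivIter A E (o + 1))
      ⊆ derivedSet (derivedSet (derivIter A E o)) := by
        rw [derivIter_add_one]
        exact derivedSet_mono _ _ inter_subset_right
    _ ⊆ derivedSet (derivIter A E o) := derivedSet_derivedSet_subset _

lemma derivIter_add_one_subset {o : Ordinal} (ho : 1 ≤ o) :
    derivIter A E (o + 1) ⊆ derivIter A E o := by
  induction o using Ordinal.limitRecOn with
  | zero => simp at ho
  | add_one o _ =>
    calc derivIter A E (o + 1 + 1) = A ∩ derivedSet (derivIter A E (o + 1)) :=
          derivIter_add_one ..
      _ ⊆ A ∩ derivedSet (derivIter A E o) :=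
          inter_subset_inter_right A (derivedSet_derivIter_add_one_subset A E o)
      _ = derivIter A E (o + 1) := (derivIter_add_one ..).symm
  | limit o hlim ih =>
    rw [derivIter_add_one]
    rintro z ⟨hzA, hz⟩
    rw [derivIter_of_isSuccLimit A E hlim, mem_iInter]
    rintro ⟨β, hβ1, hβo⟩
    have hsub : derivIter A E o ⊆ derivIter A E (β + 1) := by
      rw [derivIter_of_isSuccLimit A E hlim]
      exact iInter_subset (fun γ : Ico 1 o ↦ derivIter A E γ)
        ⟨β + 1, le_add_self, hlim.add_one_lt hβo⟩
    apply ih β hβo hβ1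
    rw [derivIter_add_one]
    exact ⟨hzA, derivedSet_derivIter_add_one_subset A E β (derivedSet_mono _ _ hsub hz)⟩

lemma derivIter_antitoneOn : AntitoneOn (derivIter A E) (Ici 1) := by
  intro β hβ γ _ hβγ
  induction γ using Ordinal.limitRecOn with
  | zero => simp_all
  | add_one γ ih =>
    rcases hβγ.eq_or_lt with rfl | hlt
    · rfl
    have hβγ' : β ≤ γ := Order.lt_add_one_iff.mp hlt
    exact (derivIter_add_one_subset A E (le_trans hβ hβγ')).trans
      (ih (mem_Ici.2 (le_trans hβ hβγ')) hβγ')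
  | limit γ hlim _ =>
    rcases hβγ.eq_or_lt with rfl | hlt
    · rfl
    rw [derivIter_of_isSuccLimit A E hlim]
    exact iInter_subset (fun δ : Ico 1 γ ↦ derivIter A E δ) ⟨β, hβ, hlt⟩

end

theorem stmt_10_general (D : Set ℂ)
    (A B : Set ℂ) :
    ∀ α : Ordinal, derivIter D (A ∪ B) α = derivIter D A α ∪ derivIter D B α := by
  intro α
  induction α using Ordinal.limitRecOn with
  | zero => simp only [derivIter_zero]
  | add_one α ih =>
    rw [derivIter_add_one, derivIter_add_one, derivIter_add_one, ih, derivedSet_union,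
      inter_union_distrib_left]
  | limit α hlim ih =>
    have hanti (E : Set ℂ) : Antitone fun β : Ico 1 α ↦ derivIter D E β :=
      fun β γ hβγ ↦ derivIter_antitoneOn D E β.2.1 γ.2.1 hβγ
    rw [derivIter_of_isSuccLimit _ _ hlim, derivIter_of_isSuccLimit _ _ hlim,
      derivIter_of_isSuccLimit _ _ hlim, ← iInter_union_of_antitone (hanti A) (hanti B)]
    exact iInter_congr fun β ↦ ih β β.2.2

theorem stmt_10 (D : Set ℂ) (hD : IsOpen D) (hDc : IsConnected D)
    (A B : Set ℂ) (hA : A ⊆ D) (hB : B ⊆ D) :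
    ∀ α : Ordinal, derivIter D (A ∪ B) α = derivIter D A α ∪ derivIter D B α :=
  stmt_10_general D A B
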